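/- IB curve preservation: if φ is sufficient for C given T, then for every R ≥ 0, sup{I(X;C) : encoders p(X|T) with C ↔ T ↔ X and I(X;T) ≤ R} = sup{I(X;C) : encoders q(X|Z) with C ↔ Z ↔ X and I(X;Z) ≤ R}, where Z = φ(T). -/

import Mathlib

open scoped BigOperators

/-- Finite-alphabet mutual information of a joint distribution `p` on `A × B`. -/
noncomputable def mi {A B : Type*} [Fintype A] [Fintype B] (p : A → B → ℝ) : ℝ :=
  ∑ a, ∑ b, p a b * Real.log (p a b / ((∑ b', p a b') * (∑ a', p a' b)))

/-- Finite-alphabet conditional mutual information `I(A;B∣Z)` of a joint on `A × B × Z`. -/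
noncomputable def cmi {A B Z : Type*} [Fintype A] [Fintype B] [Fintype Z]
    (p : A → B → Z → ℝ) : ℝ :=
  ∑ z, ∑ a, ∑ b, p a b z *
    Real.log ((p a b z * (∑ a', ∑ b', p a' b' z)) /
      ((∑ b', p a b' z) * (∑ a', p a' b z)))

/-- `A` and `B` are conditionally independent given `Z` (Markov chain `A ↔ Z ↔ B`),
for a joint distribution `p` on `A × B × Z`. -/
def CondIndep {A B Z : Type*} [Fintype A] [Fintype B] (p : A → B → Z → ℝ) : Prop :=
  ∀ a b z, p a b z * (∑ a', ∑ b', p a' b' z) = (∑ b', p a b' z) * (∑ a', p a' b z)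

/-- A stochastic kernel (each row nonnegative and summing to one). -/
def IsKernel {A B : Type*} [Fintype B] (q : A → B → ℝ) : Prop :=
  (∀ a b, 0 ≤ q a b) ∧ ∀ a, ∑ b, q a b = 1

/-- The IB Lagrangian `I(X;T) − β·I(X;C)` of an encoder `e = p(X∣T)` for the joint
`p` on `T × C`, computed under the induced joint `p(t,c)·e(x∣t)`. -/
noncomputable def fullLag {T C X : Type*} [Fintype T] [Fintype C] [Fintype X]
    (p : T → C → ℝ) (β : ℝ) (e : T → X → ℝ) : ℝ :=
  mi (fun t x => (∑ c, p t c) * e t x) - β * mi (fun c x => ∑ t, p t c * e t x)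

/-- The pushforward joint of `(φ(T), C)`. -/
noncomputable def pushJoint {T C Z : Type*} [Fintype T] [DecidableEq Z]
    (p : T → C → ℝ) (φ : T → Z) (z : Z) (c : C) : ℝ :=
  ∑ t, if φ t = z then p t c else 0

/-! Sufficiency says `p(t, c) · p(φ t) = p(φ t, c) · p(t)`. Hence averaging an encoder of `T` over
the fibers of `φ` (with weights `p(t)`) gives an encoder of `Z = φ(T)` inducing the same joint law
of `(C, X)`, and by the log-sum inequality merging the rows of a fiber cannot increase `I(X; ·)`.
Conversely an encoder of `Z` composed with `φ` is an encoder of `T` with the same `I(X;C)` and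
`I(X;T)`. So the two sets of achievable values of `I(X;C)` coincide, and so do their suprema. -/

open Real Finset

theorem sum_mul_log_div_le {ι : Type*} (s : Finset ι) {A B : ι → ℝ}
    (hA : ∀ i ∈ s, 0 ≤ A i) (hB : ∀ i ∈ s, 0 ≤ B i) (hAB : ∀ i ∈ s, B i = 0 → A i = 0) :
    (∑ i ∈ s, A i) * log ((∑ i ∈ s, A i) / ∑ i ∈ s, B i) ≤
      ∑ i ∈ s, A i * log (A i / B i) := by
  rcases (sum_nonneg hB).eq_or_lt with hB0 | hBpos
  · have hA0 : ∀ i ∈ s, A i = 0 := fun i hi =>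
      hAB i hi ((sum_eq_zero_iff_of_nonneg hB).1 hB0.symm i hi)
    rw [sum_eq_zero hA0, zero_mul, sum_eq_zero fun i hi => by rw [hA0 i hi, zero_mul]]
  · have hBA : ∀ i ∈ s, B i * (A i / B i) = A i := fun i hi => mul_div_cancel_of_imp' (hAB i hi)
    have jensen := convexOn_mul_log.map_centerMass_le hB hBpos
      (p := fun i => A i / B i) fun i hi => Set.mem_Ici.2 (div_nonneg (hA i hi) (hB i hi))
    simp only [centerMass, smul_eq_mul, Function.comp_apply, ← mul_assoc,
      sum_congr rfl hBA, ← div_eq_inv_mul, le_div_iff₀ hBpos] at jensen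
    rw [div_mul_eq_mul_div, div_mul_cancel₀ _ hBpos.ne'] at jensen
    exact jensen.trans_eq (sum_congr rfl fun i hi => by rw [hBA i hi])

section Fiber

variable {T Z X : Type*} [Fintype T] [Fintype Z] [Fintype X] [DecidableEq Z] (φ : T → Z)

theorem sum_sum_fiber_mul (w : T → ℝ) (g : Z → ℝ) :
    ∑ z, (∑ t with φ t = z, w t) * g z = ∑ t, w t * g (φ t) := by
  simp_rw [sum_mul]
  rw [← sum_fiberwise univ φ fun t => w t * g (φ t)]
  refine sum_congr rfl fun z _ => sum_congr rfl fun t ht => ?_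
  rw [(mem_filter.1 ht).2]

theorem mi_sum_fiber_le (a : T → X → ℝ) (ha : ∀ t x, 0 ≤ a t x) :
    mi (fun z x => ∑ t with φ t = z, a t x) ≤ mi a := by
  set row : T → ℝ := fun t => ∑ x, a t x
  set col : X → ℝ := fun x => ∑ t, a t x
  have hcol (x : X) : ∑ z, ∑ t with φ t = z, a t x = col x := sum_fiberwise _ _ _
  have hrow (z : Z) : ∑ x, ∑ t with φ t = z, a t x = ∑ t with φ t = z, row t := sum_comm
  have hmi : mi a = ∑ z, ∑ x, ∑ t with φ t = z, a t x * log (a t x / (row t * col x)) := by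
    rw [mi, ← sum_fiberwise univ φ]
    exact sum_congr rfl fun z _ => sum_comm
  rw [hmi, mi]
  refine sum_le_sum fun z _ => sum_le_sum fun x _ => ?_
  rw [hcol, hrow, sum_mul _ row (col x)]
  refine sum_mul_log_div_le _ (fun t _ => ha t x)
    (fun t _ => mul_nonneg (sum_nonneg fun x _ => ha t x) (sum_nonneg fun t _ => ha t x))
    fun t _ h => ?_
  rcases mul_eq_zero.1 h with h | h
  · exact le_antisymm (h ▸ single_le_sum (fun x _ => ha t x) (mem_univ x)) (ha t x)
  · exact le_antisymm (h ▸ single_le_sum (fun t _ => ha t x) (mem_univ t)) (ha t x)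

theorem mi_mul_comp (w : T → ℝ) (f : Z → X → ℝ) :
    mi (fun t x => w t * f (φ t) x) = mi (fun z x => (∑ t with φ t = z, w t) * f z x) := by
  set col : X → ℝ := fun x => ∑ z, (∑ t with φ t = z, w t) * f z x
  have hcol (x : X) : ∑ t, w t * f (φ t) x = col x := (sum_sum_fiber_mul φ w (f · x)).symm
  have hcancel (v : ℝ) (z : Z) (x : X) :
      v * f z x * log (v * f z x / ((∑ x', v * f z x') * col x)) =
        v * (f z x * log (f z x / ((∑ x', f z x') * col x))) := by
    rcases eq_or_ne v 0 with rfl | hv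
    · simp
    · rw [← mul_sum, mul_assoc v (∑ x', f z x') (col x), mul_div_mul_left _ _ hv, mul_assoc]
  have hcol' (x : X) : ∑ z, (∑ t with φ t = z, w t) * f z x = col x := rfl
  simp only [mi, hcol, hcol', hcancel]
  rw [sum_comm, sum_comm (γ := Z)]
  exact sum_congr rfl fun x _ =>
    (sum_sum_fiber_mul φ w fun z => f z x * log (f z x / ((∑ x', f z x') * col x))).symm

end Fiber

section CondKernel

variable {Z X : Type*} [Fintype X]

/-- Rows of zero mass are sent to the uniform distribution, so that this is always a kernel. -/
noncomputable def condKernel (q : Z → X → ℝ) (z : Z) (x : X) : ℝ :=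
  if ∑ x', q z x' = 0 then (Fintype.card X : ℝ)⁻¹ else q z x / ∑ x', q z x'

theorem isKernel_condKernel [Nonempty X] {q : Z → X → ℝ} (hq : ∀ z x, 0 ≤ q z x) :
    IsKernel (condKernel q) := by
  refine ⟨fun z x => ?_, fun z => ?_⟩ <;> unfold condKernel <;> split_ifs with h
  · positivity
  · exact div_nonneg (hq z x) (sum_nonneg fun x _ => hq z x)
  · simp
  · rw [← sum_div, div_self h]

theorem sum_mul_condKernel {q : Z → X → ℝ} (hq : ∀ z x, 0 ≤ q z x) (z : Z) (x : X) :
    (∑ x', q z x') * condKernel q z x = q z x := by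
  unfold condKernel
  split_ifs with h
  · rw [h, zero_mul, ((sum_eq_zero_iff_of_nonneg fun x _ => hq z x).1 h x (mem_univ x))]
  · exact mul_div_cancel₀ _ h

end CondKernel

section PushJoint

variable {T C Z : Type*} [Fintype T] [DecidableEq Z] (φ : T → Z)

theorem pushJoint_eq_sum_filter (p : T → C → ℝ) (z : Z) (c : C) :
    pushJoint p φ z c = ∑ t with φ t = z, p t c :=
  (sum_filter _ _).symm

theorem sum_pushJoint [Fintype C] (p : T → C → ℝ) (z : Z) :
    ∑ c, pushJoint p φ z c = ∑ t with φ t = z, ∑ c, p t c := by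
  simp_rw [pushJoint_eq_sum_filter]
  exact sum_comm

theorem pushJoint_nonneg {p : T → C → ℝ} (hp : ∀ t c, 0 ≤ p t c) (z : Z) (c : C) :
    0 ≤ pushJoint p φ z c :=
  sum_nonneg fun t _ => by split_ifs <;> simp [hp]

theorem le_pushJoint {p : T → C → ℝ} (hp : ∀ t c, 0 ≤ p t c) (t : T) (c : C) :
    p t c ≤ pushJoint p φ (φ t) c := by
  rw [pushJoint_eq_sum_filter]
  exact single_le_sum (fun t _ => hp t c) (mem_filter.2 ⟨mem_univ t, rfl⟩)

theorem CondIndep.mul_sum_pushJoint [Fintype C] {p : T → C → ℝ}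
    (hsuff : CondIndep fun c t z => if φ t = z then p t c else 0) (t : T) (c : C) :
    p t c * ∑ c', pushJoint p φ (φ t) c' = pushJoint p φ (φ t) c * ∑ c', p t c' := by
  have h := hsuff c t (φ t)
  simp only [↓reduceIte] at h
  exact h

end PushJoint

section Encoder

variable {T C Z X : Type*} [Fintype T] [Fintype C] [DecidableEq Z] [Fintype X]
  (φ : T → Z) (p : T → C → ℝ)

theorem mi_rate_comp [Fintype Z] (f : Z → X → ℝ) :
    mi (fun t x => (∑ c, p t c) * f (φ t) x) =
      mi (fun z x => (∑ c, pushJoint p φ z c) * f z x) := by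
  simp_rw [sum_pushJoint]
  exact mi_mul_comp φ _ f

theorem mi_relevance_comp [Fintype Z] (f : Z → X → ℝ) :
    mi (fun c x => ∑ t, p t c * f (φ t) x) = mi (fun c x => ∑ z, pushJoint p φ z c * f z x) := by
  simp_rw [pushJoint_eq_sum_filter, sum_sum_fiber_mul]

noncomputable def fiberAverage (e : T → X → ℝ) : Z → X → ℝ :=
  condKernel fun z x => ∑ t with φ t = z, (∑ c, p t c) * e t x

variable {φ p}

theorem isKernel_fiberAverage [Nonempty X] (hp : ∀ t c, 0 ≤ p t c) {e : T → X → ℝ}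
    (he : IsKernel e) : IsKernel (fiberAverage φ p e) :=
  isKernel_condKernel fun _ x => sum_nonneg fun t _ =>
    mul_nonneg (sum_nonneg fun c _ => hp t c) (he.1 t x)

theorem sum_pushJoint_mul_fiberAverage (hp : ∀ t c, 0 ≤ p t c) {e : T → X → ℝ} (he : IsKernel e)
    (z : Z) (x : X) :
    (∑ c, pushJoint p φ z c) * fiberAverage φ p e z x = ∑ t with φ t = z, (∑ c, p t c) * e t x := by
  have hrow : ∑ x', ∑ t with φ t = z, (∑ c, p t c) * e t x' = ∑ c, pushJoint p φ z c := by
    rw [sum_comm, sum_pushJoint]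
    simp_rw [← mul_sum, he.2, mul_one]
  rw [← hrow]
  exact sum_mul_condKernel (fun z x => sum_nonneg fun t _ =>
    mul_nonneg (sum_nonneg fun c _ => hp t c) (he.1 t x)) z x

theorem mi_rate_fiberAverage_le [Fintype Z] (hp : ∀ t c, 0 ≤ p t c) {e : T → X → ℝ}
    (he : IsKernel e) :
    mi (fun z x => (∑ c, pushJoint p φ z c) * fiberAverage φ p e z x) ≤
      mi (fun t x => (∑ c, p t c) * e t x) := by
  simp_rw [sum_pushJoint_mul_fiberAverage hp he]
  exact mi_sum_fiber_le φ _ fun t x => mul_nonneg (sum_nonneg fun c _ => hp t c) (he.1 t x)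

theorem pushJoint_mul_fiberAverage (hp : ∀ t c, 0 ≤ p t c)
    (hsuff : CondIndep fun c t z => if φ t = z then p t c else 0) {e : T → X → ℝ}
    (he : IsKernel e) (z : Z) (c : C) (x : X) :
    pushJoint p φ z c * fiberAverage φ p e z x = ∑ t with φ t = z, p t c * e t x := by
  rcases eq_or_ne (∑ c, pushJoint p φ z c) 0 with hW | hW
  · have hπ : pushJoint p φ z c = 0 := le_antisymm
      ((single_le_sum (f := (pushJoint p φ z ·)) (fun c _ => pushJoint_nonneg φ hp z c)
        (mem_univ c)).trans_eq hW)
      (pushJoint_nonneg φ hp z c)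
    rw [hπ, zero_mul, eq_comm]
    refine sum_eq_zero fun t ht => ?_
    obtain rfl := (mem_filter.1 ht).2
    rw [le_antisymm (hπ ▸ le_pushJoint φ hp t c) (hp t c), zero_mul]
  · refine mul_left_cancel₀ hW ?_
    rw [mul_left_comm, sum_pushJoint_mul_fiberAverage hp he, mul_sum, mul_sum]
    refine sum_congr rfl fun t ht => ?_
    obtain rfl := (mem_filter.1 ht).2
    linear_combination (-e t x) * hsuff.mul_sum_pushJoint φ t c

end Encoder

theorem stmt11_general {T C Z X : Type*} [Fintype T] [Fintype C] [Fintype Z] [DecidableEq Z]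
    [Fintype X] [Nonempty X]
    (φ : T → Z) (p : T → C → ℝ) (R : ℝ)
    (hpos : ∀ t c, 0 ≤ p t c)
    (hsuff : CondIndep (fun c t z => if φ t = z then p t c else 0)) :
    sSup {v : ℝ | ∃ e : T → X → ℝ, IsKernel e ∧
        mi (fun t x => (∑ c, p t c) * e t x) ≤ R ∧
        v = mi (fun c x => ∑ t, p t c * e t x)} =
      sSup {v : ℝ | ∃ f : Z → X → ℝ, IsKernel f ∧
        mi (fun z x => (∑ c, pushJoint p φ z c) * f z x) ≤ R ∧
        v = mi (fun c x => ∑ z, pushJoint p φ z c * f z x)} := by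
  congr 1
  ext v
  constructor
  · rintro ⟨e, he, hrate, rfl⟩
    refine ⟨fiberAverage φ p e, isKernel_fiberAverage hpos he,
      (mi_rate_fiberAverage_le hpos he).trans hrate, ?_⟩
    simp_rw [pushJoint_mul_fiberAverage hpos hsuff he, sum_fiberwise]
  · rintro ⟨f, hf, hrate, rfl⟩
    exact ⟨fun t x => f (φ t) x, ⟨fun t x => hf.1 (φ t) x, fun t => hf.2 (φ t)⟩,
      (mi_rate_comp φ p f).trans_le hrate, (mi_relevance_comp φ p f).symm⟩

/-- IB curve preservation: if `φ` is sufficient for `C` given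
`T`, then for every `R ≥ 0`,
`sup{I(X;C) : p(X∣T), I(X;T) ≤ R} = sup{I(X;C) : q(X∣Z), I(X;Z) ≤ R}`
with `Z = φ(T)`. -/
theorem stmt11 {T C Z X : Type*} [Fintype T] [Fintype C] [Fintype Z] [DecidableEq Z]
    [Fintype X] [Nonempty X]
    (φ : T → Z) (p : T → C → ℝ) (R : ℝ) (hR : 0 ≤ R)
    (hpos : ∀ t c, 0 ≤ p t c)
    (hsum : ∑ t, ∑ c, p t c = 1)
    (hsuff : CondIndep (fun c t z => if φ t = z then p t c else 0)) :
    sSup {v : ℝ | ∃ e : T → X → ℝ, IsKernel e ∧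
        mi (fun t x => (∑ c, p t c) * e t x) ≤ R ∧
        v = mi (fun c x => ∑ t, p t c * e t x)} =
      sSup {v : ℝ | ∃ f : Z → X → ℝ, IsKernel f ∧
        mi (fun z x => (∑ c, pushJoint p φ z c) * f z x) ≤ R ∧
        v = mi (fun c x => ∑ z, pushJoint p φ z c * f z x)} :=
  stmt11_general φ p R hpos hsuff
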